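/- arXiv:2602.14717 — 2 statements merged into one kernel-verified Lean document; each statement's English description precedes it below -/
import Mathlib

section
/- The abstract accuracy transformer is sound: given n prediction/label pairs, where for each t the predicted Boolean yₜ' lies in the Boolean interval ŷₜ = (lₜ, uₜ), and the ground truth labels yₜ are concrete Booleans, then (1/n)·Σₜ 𝟙[yₜ' = yₜ] lies in the real interval [(1/n)·Σₜ mₜ, (1/n)·Σₜ Mₜ], where [mₜ, Mₜ] is defined as [1,1] if lₜ = uₜ = yₜ, [0,0] if lₜ = uₜ ≠ yₜ, and [0,1] if lₜ ≠ uₜ. -/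
/-!
If `l = u`, then `l ≤ y' ≤ u` forces `y' = l`, so the indicator `𝟙[y' = y]` is known exactly;
otherwise the trivial bounds `0 ≤ 𝟙 ≤ 1` apply. Summing these per-example bounds and scaling
by `1 / n ≥ 0` gives the interval for the accuracy.
-/

section AbstractIndicator

variable {α R : Type*} [PartialOrder α] [DecidableEq α] [Zero R] [One R] [Preorder R]
  [ZeroLEOneClass R] {l b u : α}

theorem ite_eq_lower_le_ite_eq (y : α) (hl : l ≤ b) (hu : b ≤ u) :
    (if l = u then (if l = y then (1 : R) else 0) else 0) ≤ if b = y then 1 else 0 := by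
  by_cases hlu : l = u
  · obtain rfl : b = l := le_antisymm (hlu ▸ hu) hl
    rw [if_pos hlu]
  · rw [if_neg hlu]
    split_ifs
    exacts [zero_le_one, le_rfl]

theorem ite_eq_le_ite_eq_upper (y : α) (hl : l ≤ b) (hu : b ≤ u) :
    (if b = y then (1 : R) else 0) ≤ if l = u then (if l = y then 1 else 0) else 1 := by
  by_cases hlu : l = u
  · obtain rfl : b = l := le_antisymm (hlu ▸ hu) hl
    rw [if_pos hlu]
  · rw [if_neg hlu]
    split_ifs
    exacts [le_rfl, zero_le_one]

end AbstractIndicator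

theorem abstract_accuracy_sound_general (n : ℕ)
    (y' y l u : Fin n → Bool)
    (hl : ∀ t, l t ≤ y' t) (hu : ∀ t, y' t ≤ u t) :
    (1 / (n : ℝ)) * ∑ t, (if l t = u t then (if l t = y t then (1 : ℝ) else 0) else 0)
      ≤ (1 / (n : ℝ)) * ∑ t, (if y' t = y t then (1 : ℝ) else 0) ∧
    (1 / (n : ℝ)) * ∑ t, (if y' t = y t then (1 : ℝ) else 0)
      ≤ (1 / (n : ℝ)) * ∑ t, (if l t = u t then (if l t = y t then (1 : ℝ) else 0) else 1) := by
  have hscale : (0 : ℝ) ≤ 1 / n := by positivity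
  exact ⟨mul_le_mul_of_nonneg_left
      (Finset.sum_le_sum fun t _ => ite_eq_lower_le_ite_eq (y t) (hl t) (hu t)) hscale,
    mul_le_mul_of_nonneg_left
      (Finset.sum_le_sum fun t _ => ite_eq_le_ite_eq_upper (y t) (hl t) (hu t)) hscale⟩

/-- Soundness of the abstract accuracy transformer: the concrete accuracy lies
in the interval obtained by summing per-example abstract indicator intervals. -/
theorem abstract_accuracy_sound (n : ℕ) (hn : 0 < n)
    (y' y l u : Fin n → Bool)
    (hlu : ∀ t, l t ≤ u t)
    (hl : ∀ t, l t ≤ y' t) (hu : ∀ t, y' t ≤ u t) :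
    (1 / (n : ℝ)) * ∑ t, (if l t = u t then (if l t = y t then (1 : ℝ) else 0) else 0)
      ≤ (1 / (n : ℝ)) * ∑ t, (if y' t = y t then (1 : ℝ) else 0) ∧
    (1 / (n : ℝ)) * ∑ t, (if y' t = y t then (1 : ℝ) else 0)
      ≤ (1 / (n : ℝ)) * ∑ t, (if l t = u t then (if l t = y t then (1 : ℝ) else 0) else 1) :=
  abstract_accuracy_sound_general n y' y l u hl hu
end

section
/- Suppose a search maintains a finite collection h of abstract nodes, each node p̂ with a set γ(p̂) of concrete programs and bounds ν(p̂) ≤ φ(p) ≤ μ(p̂) for all p ∈ γ(p̂), such that the union of γ(p̂) over p̂ ∈ h equals the full (nonempty) set of programs P. If max over p̂ ∈ h of μ(p̂) minus max over p̂ ∈ h of ν(p̂) is at most ε, then for the node p̂* maximizing ν, every p ∈ γ(p̂*) satisfies sup_{p' ∈ P} φ(p') − φ(p) ≤ ε (i.e., p is ε-optimal). -/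
theorem Finset.le_sup'_of_mem_biUnion {ι α β : Type*} [SemilatticeSup β] {s : Finset ι}
    (hs : s.Nonempty) {γ : ι → Set α} {f : α → β} {μ : ι → β}
    (hbound : ∀ q ∈ s, ∀ p ∈ γ q, f p ≤ μ q) {p : α} (hp : p ∈ ⋃ q ∈ s, γ q) :
    f p ≤ s.sup' hs μ := by
  obtain ⟨q, hq, hpq⟩ := Set.mem_iUnion₂.mp hp
  exact (hbound q hq p hpq).trans (s.le_sup' μ hq)

theorem astar_epsilon_optimal_general
    {Prog Node : Type*}
    (γ : Node → Set Prog) (φ : Prog → ℝ) (μ ν : Node → ℝ)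
    (h : Finset Node) (hne : h.Nonempty)
    (hbounds : ∀ q ∈ h, ∀ p ∈ γ q, ν q ≤ φ p ∧ φ p ≤ μ q)
    (hcover : (⋃ q ∈ h, γ q) = Set.univ)
    (ε : ℝ)
    (hgap : h.sup' hne μ - h.sup' hne ν ≤ ε)
    (pstar : Node) (hpstar : pstar ∈ h)
    (hmax : ∀ q ∈ h, ν q ≤ ν pstar) :
    ∀ p ∈ γ pstar, ∀ p' : Prog, φ p' - φ p ≤ ε := by
  intro p hp p'
  have hupper : φ p' ≤ h.sup' hne μ :=
    h.le_sup'_of_mem_biUnion hne (fun q hq x hx ↦ (hbounds q hq x hx).2) (hcover ▸ trivial)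
  have hstar : h.sup' hne ν ≤ ν pstar := h.sup'_le hne ν hmax
  have hlower : ν pstar ≤ φ p := (hbounds pstar hpstar p hp).1
  linarith

/-- ε-optimality at termination of the A* search: if the frontier `h` covers
all programs, each node's bounds are valid, and the gap between the greatest
upper bound and greatest lower bound over the frontier is at most `ε`, then
every concrete program in the node maximizing the lower bound `ν` is
`ε`-optimal. -/
theorem astar_epsilon_optimal
    {Prog Node : Type*} [Nonempty Prog]
    (γ : Node → Set Prog) (φ : Prog → ℝ) (μ ν : Node → ℝ)
    (h : Finset Node) (hne : h.Nonempty)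
    (hbounds : ∀ q ∈ h, ∀ p ∈ γ q, ν q ≤ φ p ∧ φ p ≤ μ q)
    (hcover : (⋃ q ∈ h, γ q) = Set.univ)
    (ε : ℝ) (hε : 0 ≤ ε)
    (hgap : h.sup' hne μ - h.sup' hne ν ≤ ε)
    (pstar : Node) (hpstar : pstar ∈ h)
    (hmax : ∀ q ∈ h, ν q ≤ ν pstar) :
    ∀ p ∈ γ pstar, ∀ p' : Prog, φ p' - φ p ≤ ε :=
  astar_epsilon_optimal_general γ φ μ ν h hne hbounds hcover ε hgap pstar hpstar hmax
end
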